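/- arXiv:1512.01721 — 3 statements merged into one kernel-verified Lean document; each statement's English description precedes it below -/
import Mathlib

section
/- Let e ≥ 1 and k ≥ 0 be integers, and let G₀ be the star good tree of total degree e: a good tree with e vertices having one central vertex v₀ adjacent to each of the other e−1 vertices, all of whose k marked points equal v₀. Then every good tree of total degree e with k marked points can be joined to G₀ by a finite chain of good trees in which each pair of consecutive good trees is connected by a conic deformation. -/
/-!
A *dual graph* is a finite tree equipped with a nonnegative integer degree for
each vertex and a finite multiset of vertices called marked points.
-/
structure DualGraph where
  V : Type
  fintypeV : Fintype V
  decEqV : DecidableEq V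
  graph : SimpleGraph V
  isTree : graph.IsTree
  deg : V → ℕ
  marks : Multiset V

attribute [instance] DualGraph.fintypeV DualGraph.decEqV

namespace DualGraph

/-- The total degree `deg(G) = Σ_v d_v`. -/
def totalDeg (G : DualGraph) : ℕ := ∑ v, G.deg v

/-- A good tree is a dual graph all of whose vertex degrees equal `1`. -/
def IsGoodTree (G : DualGraph) : Prop := ∀ v, G.deg v = 1

/-- `G.IsContractionAlong G₁ H` : the dual graph `G₁` is (isomorphic to) the
contraction of `G` along the nonempty connected (induced) subgraph on the
vertex set `H`: its vertices are the vertices of `G` not in `H` together with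
one extra vertex `v_H`; edges of `G` between vertices not in `H` survive, and a
vertex `u ∉ H` is joined to `v_H` exactly when `u` is adjacent in `G` to some
vertex of `H`; the degree of `v_H` is `Σ_{v ∈ H} d_v` and the other degrees are
unchanged; the marked points not in `H` survive and `v_H` is marked with
multiplicity the number of marked points of `G` lying in `H`. -/
def IsContractionAlong (G G₁ : DualGraph) (H : Finset G.V) : Prop :=
  H.Nonempty ∧ (SimpleGraph.induce (↑H : Set G.V) G.graph).Connected ∧
  ∃ e : ({v : G.V // v ∉ H} ⊕ Unit) ≃ G₁.V,
    (∀ u w : {v : G.V // v ∉ H},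
      G₁.graph.Adj (e (Sum.inl u)) (e (Sum.inl w)) ↔ G.graph.Adj u.1 w.1) ∧
    (∀ u : {v : G.V // v ∉ H},
      G₁.graph.Adj (e (Sum.inl u)) (e (Sum.inr ())) ↔ ∃ h ∈ H, G.graph.Adj u.1 h) ∧
    (∀ u : {v : G.V // v ∉ H}, G₁.deg (e (Sum.inl u)) = G.deg u.1) ∧
    G₁.deg (e (Sum.inr ())) = ∑ v ∈ H, G.deg v ∧
    (∀ u : {v : G.V // v ∉ H}, G₁.marks.count (e (Sum.inl u)) = G.marks.count u.1) ∧
    G₁.marks.count (e (Sum.inr ())) = Multiset.card (G.marks.filter (· ∈ H))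

/-- `K` is a conic deformation of `G` if `K` is obtained from `G` by
contracting a subgraph of total degree two. -/
def IsConicDeformation (K G : DualGraph) : Prop :=
  ∃ H : Finset G.V, (∑ v ∈ H, G.deg v) = 2 ∧ G.IsContractionAlong K H

/-- Two good trees are connected by a conic deformation if some dual graph `K`
is a conic deformation of both of them. -/
def ConnectedByConicDeformation (G₂ G₃ : DualGraph) : Prop :=
  ∃ K : DualGraph, K.IsConicDeformation G₂ ∧ K.IsConicDeformation G₃

/-- Isomorphism of dual graphs: a bijection of vertices preserving adjacency,
degrees and marked points (with multiplicity). -/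
def Iso (G G' : DualGraph) : Prop :=
  ∃ e : G.V ≃ G'.V,
    (∀ a b : G.V, G'.graph.Adj (e a) (e b) ↔ G.graph.Adj a b) ∧
    (∀ v : G.V, G'.deg (e v) = G.deg v) ∧
    (∀ v : G.V, G'.marks.count (e v) = G.marks.count v)

end DualGraph

/-- `G₀` is the star good tree of total degree `e` with `k` marked points: a
good tree of total degree `e` (hence with `e` vertices) having a central vertex
`v₀` adjacent to every other vertex (and no other edges), all of whose `k`
marked points equal `v₀`. -/
def DualGraph.IsStarGoodTree (G₀ : DualGraph) (e k : ℕ) : Prop :=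
  G₀.IsGoodTree ∧ G₀.totalDeg = e ∧
  ∃ v₀ : G₀.V, G₀.marks = Multiset.replicate k v₀ ∧
    ∀ a b : G₀.V, G₀.graph.Adj a b ↔ ((a = v₀ ∧ b ≠ v₀) ∨ (b = v₀ ∧ a ≠ v₀))

/-!
Present a good tree by a parent map towards a root `r`, ranked by the distance to `r`. Let `a`
be a non-root vertex with parent `b`. Contracting the edge `{a, b}` yields the same dual graph as
contracting it after re-hanging a child of `a` onto `b`, or after moving a marked point from `a`
to `b`; hence each of these moves joins two good trees by a conic deformation. Both moves lower
`∑ v, rank (parent v) + ∑ rank (marks)`, and when neither applies, every vertex hangs from the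
root and every marked point lies on it: the tree is the star, which is unique up to isomorphism.
-/

theorem Relation.ReflTransGen.exists_fin_chain {α : Type*} {r : α → α → Prop} {a b : α}
    (h : ReflTransGen r a b) :
    ∃ (m : ℕ) (c : Fin (m + 1) → α),
      c 0 = a ∧ c (Fin.last m) = b ∧ ∀ i : Fin m, r (c i.castSucc) (c i.succ) := by
  induction h using Relation.ReflTransGen.head_induction_on with
  | refl => exact ⟨0, fun _ => b, rfl, rfl, Fin.elim0⟩
  | head hac _ ih =>
    obtain ⟨m, c, hc0, hcm, hc⟩ := ih
    refine ⟨m + 1, Fin.cons _ c, rfl, by rw [← Fin.succ_last, Fin.cons_succ, hcm], ?_⟩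
    intro i
    cases i using Fin.cases with
    | zero => simpa [hc0] using hac
    | succ j => simpa [← Fin.succ_castSucc] using hc j

namespace SimpleGraph

variable {V : Type*} {G H : SimpleGraph V}

theorem Connected.exists_adj_dist_lt (hG : G.Connected) (r : V) {v : V} (hv : v ≠ r) :
    ∃ u, G.Adj v u ∧ G.dist r u < G.dist r v := by
  obtain ⟨p, hp⟩ := hG.exists_walk_length_eq_dist v r
  obtain ⟨u, hvu, q, rfl⟩ := p.exists_eq_cons_of_ne hv
  refine ⟨u, hvu, ?_⟩
  rw [dist_comm, dist_comm (u := r), ← hp, Walk.length_cons]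
  exact Nat.lt_succ_of_le (dist_le q)

theorem IsTree.eq_of_le (hG : G.IsTree) (hH : H.Connected) (hle : H ≤ G) : H = G :=
  (isTree_iff_minimal_connected.1 hG).eq_of_le hH hle

end SimpleGraph

namespace Finset

variable {V : Type} [DecidableEq V] {H : Finset V} {v : V}

def collapse (H : Finset V) (v : V) : {v // v ∉ H} ⊕ Unit :=
  if h : v ∈ H then .inr () else .inl ⟨v, h⟩

theorem collapse_of_mem (hv : v ∈ H) : H.collapse v = .inr () :=
  dif_pos hv

@[simp]
theorem collapse_eq_inr_iff : H.collapse v = .inr () ↔ v ∈ H := by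
  unfold collapse
  split_ifs with h <;> simp [h]

@[simp]
theorem collapse_eq_inl_iff {w : {v // v ∉ H}} : H.collapse v = .inl w ↔ v = w := by
  unfold collapse
  split_ifs with h
  · simp only [false_iff]
    exact fun hv => w.2 (hv ▸ h)
  · simp [Subtype.ext_iff]

@[simp]
theorem inr_eq_collapse_iff : .inr () = H.collapse v ↔ v ∈ H :=
  eq_comm.trans collapse_eq_inr_iff

@[simp]
theorem inl_eq_collapse_iff {w : {v // v ∉ H}} : .inl w = H.collapse v ↔ ↑w = v :=
  eq_comm.trans <| collapse_eq_inl_iff.trans eq_comm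

theorem count_map_collapse_inl (m : Multiset V) (w : {v // v ∉ H}) :
    (m.map H.collapse).count (.inl w) = m.count w.1 := by
  rw [Multiset.count_map, Multiset.count_eq_card_filter_eq]
  simp_rw [inl_eq_collapse_iff]

theorem count_map_collapse_inr (m : Multiset V) :
    (m.map H.collapse).count (.inr ()) = Multiset.card (m.filter (· ∈ H)) := by
  rw [Multiset.count_map]
  simp_rw [inr_eq_collapse_iff]

end Finset

@[ext]
structure ParentTree {V : Type} (rank : V → ℕ) where
  root : V
  parent : V → V
  rank_parent_lt : ∀ v, v ≠ root → rank (parent v) < rank v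
  marks : Multiset V

namespace ParentTree

open SimpleGraph

section Graph

variable {V : Type} {rank : V → ℕ} (T : ParentTree rank)

theorem parent_ne {v : V} (hv : v ≠ T.root) : T.parent v ≠ v :=
  fun h => (T.rank_parent_lt v hv).ne (congrArg rank h)

def graph : SimpleGraph V where
  Adj u w := (u ≠ T.root ∧ T.parent u = w) ∨ (w ≠ T.root ∧ T.parent w = u)
  symm := ⟨fun _ _ => Or.symm⟩
  loopless := ⟨fun _ h => by rcases h with ⟨hv, h⟩ | ⟨hv, h⟩ <;> exact T.parent_ne hv h⟩

theorem graph_adj {u w : V} :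
    T.graph.Adj u w ↔ (u ≠ T.root ∧ T.parent u = w) ∨ (w ≠ T.root ∧ T.parent w = u) :=
  Iff.rfl

theorem graph_adj_parent {v : V} (hv : v ≠ T.root) : T.graph.Adj v (T.parent v) :=
  Or.inl ⟨hv, rfl⟩

theorem reachable_root (v : V) : T.graph.Reachable v T.root := by
  induction v using (measure rank).wf.induction with
  | h v ih =>
    by_cases hv : v = T.root
    · exact hv ▸ Reachable.refl v
    · exact (T.graph_adj_parent hv).reachable.trans (ih _ (T.rank_parent_lt v hv))

theorem graph_connected : T.graph.Connected :=
  have : Nonempty V := ⟨T.root⟩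
  ⟨fun u w => (T.reachable_root u).trans (T.reachable_root w).symm⟩

noncomputable def nonRootEquivEdgeSet : {v // v ≠ T.root} ≃ T.graph.edgeSet :=
  Equiv.ofBijective (fun v => ⟨s(v.1, T.parent v.1), T.graph_adj_parent v.2⟩) <| by
    constructor
    · rintro ⟨v, hv⟩ ⟨w, hw⟩ h
      rcases Sym2.eq_iff.1 (congrArg Subtype.val h) with ⟨h, -⟩ | ⟨h, h'⟩
      · exact Subtype.ext h
      · dsimp only at h h'
        have hv := T.rank_parent_lt v hv
        have hw := T.rank_parent_lt w hw
        rw [h'] at hv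
        rw [← h] at hw
        omega
    · rintro ⟨e, he⟩
      induction e using Sym2.ind with
      | h u w =>
        rcases he with ⟨hu, h⟩ | ⟨hw, h⟩
        · exact ⟨⟨u, hu⟩, Subtype.ext (by simp_all)⟩
        · exact ⟨⟨w, hw⟩, Subtype.ext (by simp_all [Sym2.eq_swap])⟩

theorem isTree [Finite V] : T.graph.IsTree := by
  classical
  refine isTree_iff_connected_and_card.2 ⟨T.graph_connected, ?_⟩
  rw [← Nat.card_congr T.nonRootEquivEdgeSet, ← Finite.card_option,
    Nat.card_congr (Equiv.optionSubtypeNe T.root)]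

abbrev toDualGraph [Fintype V] [DecidableEq V] (deg : V → ℕ) : DualGraph :=
  { V, fintypeV := inferInstance, decEqV := inferInstance, graph := T.graph,
    isTree := T.isTree, deg, marks := T.marks }

end Graph

section Contraction

variable {V : Type} [DecidableEq V] {rank : V → ℕ} (T : ParentTree rank) {a b : V}

def contractRank (rank : V → ℕ) (a b : V) : {v // v ∉ ({a, b} : Finset V)} ⊕ Unit → ℕ :=
  Sum.elim (fun v => rank v) fun _ => rank b

theorem contractRank_collapse_le (ha : a ≠ T.root) (hab : T.parent a = b) (v : V) :
    contractRank rank a b (({a, b} : Finset V).collapse v) ≤ rank v := by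
  unfold Finset.collapse
  split_ifs with hv
  · rcases Finset.mem_insert.1 hv with rfl | hv
    · exact (hab ▸ T.rank_parent_lt _ ha).le
    · rw [Finset.mem_singleton.1 hv]
      exact le_rfl
  · exact le_rfl

/-- The contraction along the edge `{a, b}` is again presented by a parent map, which is how it is
seen to be a tree. -/
def contract (ha : a ≠ T.root) (hab : T.parent a = b) : ParentTree (contractRank rank a b) where
  root := ({a, b} : Finset V).collapse T.root
  parent := Sum.elim (fun v => ({a, b} : Finset V).collapse (T.parent v))
    fun _ => ({a, b} : Finset V).collapse (T.parent b)
  rank_parent_lt := by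
    rintro (v | ⟨⟩) hv
    · have hv : v.1 ≠ T.root := fun h => hv (Finset.collapse_eq_inl_iff.2 h.symm).symm
      exact (T.contractRank_collapse_le ha hab _).trans_lt (T.rank_parent_lt _ hv)
    · have hb : b ≠ T.root := fun h => hv (Finset.collapse_eq_inr_iff.2 (by simp [h])).symm
      exact (T.contractRank_collapse_le ha hab _).trans_lt (T.rank_parent_lt _ hb)
  marks := T.marks.map ({a, b} : Finset V).collapse

theorem contract_adj_inl_inl (ha : a ≠ T.root) (hab : T.parent a = b)
    (u w : {v // v ∉ ({a, b} : Finset V)}) :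
    (T.contract ha hab).graph.Adj (.inl u) (.inl w) ↔ T.graph.Adj u w := by
  simp [graph_adj, contract]

theorem contract_adj_inl_inr (ha : a ≠ T.root) (hab : T.parent a = b)
    (u : {v // v ∉ ({a, b} : Finset V)}) :
    (T.contract ha hab).graph.Adj (.inl u) (.inr ()) ↔ T.graph.Adj u a ∨ T.graph.Adj u b := by
  have hu : (u : V) ∉ ({a, b} : Finset V) := u.2
  simp only [Finset.mem_insert, Finset.mem_singleton, not_or] at hu
  simp only [graph_adj, contract, Sum.elim_inl, Sum.elim_inr, ne_eq, Finset.inl_eq_collapse_iff,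
    Finset.inr_eq_collapse_iff, Finset.collapse_eq_inl_iff, Finset.collapse_eq_inr_iff,
    Finset.mem_insert, Finset.mem_singleton]
  grind

theorem isContractionAlong_contract [Fintype V] (deg : V → ℕ) (ha : a ≠ T.root)
    (hab : T.parent a = b) :
    (T.toDualGraph deg).IsContractionAlong
      ((T.contract ha hab).toDualGraph (Sum.elim (fun v => deg v) fun _ => deg a + deg b))
      {a, b} := by
  have hne : a ≠ b := hab ▸ (T.parent_ne ha).symm
  refine ⟨by simp, ?_, Equiv.refl _, T.contract_adj_inl_inl ha hab, fun u => ?_, fun _ => rfl,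
    (Finset.sum_pair hne).symm, Finset.count_map_collapse_inl _, Finset.count_map_collapse_inr _⟩
  · rw [Finset.coe_pair]
    exact induce_pair_connected_of_adj (hab ▸ T.graph_adj_parent ha)
  · simp [T.contract_adj_inl_inr ha hab]

theorem connectedByConicDeformation_of_contract_eq [Fintype V] {T T' : ParentTree rank}
    (ha : a ≠ T.root) (hab : T.parent a = b) (ha' : a ≠ T'.root) (hab' : T'.parent a = b)
    (h : T.contract ha hab = T'.contract ha' hab') :
    (T.toDualGraph 1).ConnectedByConicDeformation (T'.toDualGraph 1) := by
  have hpair : ∑ v ∈ ({a, b} : Finset V), (1 : V → ℕ) v = 2 := by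
    simp [Finset.card_pair (hab ▸ (T.parent_ne ha).symm)]
  refine ⟨_, ⟨{a, b}, hpair, T.isContractionAlong_contract 1 ha hab⟩,
    ⟨{a, b}, hpair, ?_⟩⟩
  rw [h]
  exact T'.isContractionAlong_contract 1 ha' hab'

end Contraction

section Moves

variable {V : Type} [DecidableEq V] {rank : V → ℕ} (T : ParentTree rank) {x : V}

def liftToGrandparent (hx : T.parent x ≠ T.root) : ParentTree rank where
  root := T.root
  parent := Function.update T.parent x (T.parent (T.parent x))
  rank_parent_lt v hv := by
    rcases eq_or_ne v x with rfl | hvx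
    · simpa using (T.rank_parent_lt _ hx).trans (T.rank_parent_lt _ hv)
    · simpa [hvx] using T.rank_parent_lt v hv
  marks := T.marks

def moveMarkToParent (x : V) : ParentTree rank :=
  { T with marks := T.parent x ::ₘ T.marks.erase x }

theorem connectedByConicDeformation_liftToGrandparent [Fintype V] (hx₀ : x ≠ T.root)
    (hx : T.parent x ≠ T.root) :
    (T.toDualGraph 1).ConnectedByConicDeformation ((T.liftToGrandparent hx).toDualGraph 1) := by
  have hpx : T.parent x ≠ x := T.parent_ne hx₀
  have hppx : T.parent (T.parent x) ≠ x := fun h =>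
    ((T.rank_parent_lt _ hx).trans (T.rank_parent_lt _ hx₀)).ne (congrArg rank h)
  refine connectedByConicDeformation_of_contract_eq hx rfl hx
    (by simp [liftToGrandparent, hpx]) (ParentTree.ext rfl ?_ rfl)
  funext v
  rcases v with v | ⟨⟩
  · rcases eq_or_ne v.1 x with hv | hv <;>
      simp [contract, liftToGrandparent, hv, Finset.collapse_of_mem]
  · simp [contract, liftToGrandparent, hppx]

theorem connectedByConicDeformation_moveMarkToParent [Fintype V] (hx₀ : x ≠ T.root)
    (hx : x ∈ T.marks) :
    (T.toDualGraph 1).ConnectedByConicDeformation ((T.moveMarkToParent x).toDualGraph 1) := by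
  refine connectedByConicDeformation_of_contract_eq hx₀ rfl hx₀ rfl (ParentTree.ext rfl rfl ?_)
  conv_lhs => rw [contract, ← Multiset.cons_erase hx]
  simp [contract, moveMarkToParent, Finset.collapse_of_mem]

def weight [Fintype V] : ℕ := ∑ v, rank (T.parent v) + (T.marks.map rank).sum

theorem weight_liftToGrandparent_lt [Fintype V] (hx : T.parent x ≠ T.root) :
    (T.liftToGrandparent hx).weight < T.weight := by
  have hsum : ∑ v, rank ((T.liftToGrandparent hx).parent v) < ∑ v, rank (T.parent v) := by
    refine Finset.sum_lt_sum (fun v _ => ?_) ⟨x, Finset.mem_univ x, ?_⟩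
    · rcases eq_or_ne v x with rfl | hv
      · simpa [liftToGrandparent] using (T.rank_parent_lt _ hx).le
      · simp [liftToGrandparent, hv]
    · simpa [liftToGrandparent] using T.rank_parent_lt _ hx
  simpa [weight, liftToGrandparent] using hsum

theorem weight_moveMarkToParent_lt [Fintype V] (hx₀ : x ≠ T.root) (hx : x ∈ T.marks) :
    (T.moveMarkToParent x).weight < T.weight := by
  have := T.rank_parent_lt x hx₀
  conv_rhs => rw [weight, ← Multiset.cons_erase hx]
  simp only [weight, moveMarkToParent, Multiset.map_cons, Multiset.sum_cons]
  omega

def IsStar : Prop := (∀ v, v ≠ T.root → T.parent v = T.root) ∧ ∀ v ∈ T.marks, v = T.root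

theorem exists_connected_weight_lt_of_not_isStar [Fintype V] (h : ¬T.IsStar) :
    ∃ T' : ParentTree rank, (T.toDualGraph 1).ConnectedByConicDeformation (T'.toDualGraph 1) ∧
      T'.weight < T.weight ∧ Multiset.card T'.marks = Multiset.card T.marks := by
  simp only [IsStar, not_and_or, not_forall] at h
  rcases h with ⟨x, hx₀, hx⟩ | ⟨x, hx, hx₀⟩
  · exact ⟨_, T.connectedByConicDeformation_liftToGrandparent hx₀ hx,
      T.weight_liftToGrandparent_lt hx, rfl⟩
  · refine ⟨_, T.connectedByConicDeformation_moveMarkToParent hx₀ hx,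
      T.weight_moveMarkToParent_lt hx₀ hx, ?_⟩
    simp [moveMarkToParent, Multiset.card_erase_add_one hx]

theorem exists_isStar_reflTransGen [Fintype V] :
    ∃ S : ParentTree rank, S.IsStar ∧ Multiset.card S.marks = Multiset.card T.marks ∧
      Relation.ReflTransGen (fun T T' : ParentTree rank =>
        (T.toDualGraph 1).ConnectedByConicDeformation (T'.toDualGraph 1)) T S := by
  induction hw : T.weight using Nat.strong_induction_on generalizing T with
  | _ n ih =>
    by_cases h : T.IsStar
    · exact ⟨T, h, rfl, .refl⟩
    obtain ⟨T', hTT', hw', hcard⟩ := T.exists_connected_weight_lt_of_not_isStar h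
    obtain ⟨S, hS, hcard', hT'S⟩ := ih _ (hw ▸ hw') T' rfl
    exact ⟨S, hS, hcard'.trans hcard, .head hTT' hT'S⟩

theorem IsStar.isStarGoodTree [Fintype V] (hT : T.IsStar) :
    (T.toDualGraph 1).IsStarGoodTree (Fintype.card V) (Multiset.card T.marks) := by
  refine ⟨fun _ => rfl, by simp [DualGraph.totalDeg], T.root,
    Multiset.eq_replicate_card.2 hT.2, fun u w => ?_⟩
  have hu := hT.1 u
  have hw := hT.1 w
  change T.graph.Adj u w ↔ _
  rw [graph_adj]
  grind

end Moves

section OfConnected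

variable {V : Type} [DecidableEq V] {G : SimpleGraph V}

noncomputable def ofConnected (hG : G.Connected) (r : V) (m : Multiset V) :
    ParentTree (G.dist r) where
  root := r
  parent v := if hv : v = r then r else (hG.exists_adj_dist_lt r hv).choose
  rank_parent_lt v hv := by simpa [hv] using (hG.exists_adj_dist_lt r hv).choose_spec.2
  marks := m

theorem graph_ofConnected (hG : G.IsTree) (r : V) (m : Multiset V) :
    (ofConnected hG.connected r m).graph = G := by
  refine hG.eq_of_le (graph_connected _) fun u w h => ?_
  have hadj : ∀ v, v ≠ r → G.Adj v ((ofConnected hG.connected r m).parent v) := fun v hv => by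
    simpa [ofConnected, hv] using (hG.connected.exists_adj_dist_lt r hv).choose_spec.1
  rcases h with ⟨hu, rfl⟩ | ⟨hw, rfl⟩
  · exact hadj u hu
  · exact (hadj w hw).symm

end OfConnected

end ParentTree

namespace DualGraph

theorem IsGoodTree.totalDeg_eq_card {G : DualGraph} (hG : G.IsGoodTree) :
    G.totalDeg = Fintype.card G.V := by
  simp [totalDeg, hG _]

theorem IsGoodTree.ofConnected_iso {G : DualGraph} (hG : G.IsGoodTree) (r : G.V) :
    ((ParentTree.ofConnected G.isTree.connected r G.marks).toDualGraph 1).Iso G :=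
  ⟨Equiv.refl _, fun _ _ => by simp [ParentTree.graph_ofConnected G.isTree], fun v => hG v,
    fun _ => rfl⟩

theorem IsStarGoodTree.iso {G₁ G₂ : DualGraph} {e k : ℕ} (h₁ : G₁.IsStarGoodTree e k)
    (h₂ : G₂.IsStarGoodTree e k) : G₁.Iso G₂ := by
  obtain ⟨hg₁, hd₁, v₁, hm₁, hadj₁⟩ := h₁
  obtain ⟨hg₂, hd₂, v₂, hm₂, hadj₂⟩ := h₂
  obtain ⟨e₀⟩ : Nonempty (G₁.V ≃ G₂.V) := Fintype.card_eq.1 <| by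
    rw [← hg₁.totalDeg_eq_card, ← hg₂.totalDeg_eq_card, hd₁, hd₂]
  let E := e₀.trans (Equiv.swap (e₀ v₁) v₂)
  have hE₁ : E v₁ = v₂ := Equiv.swap_apply_left _ _
  have hE : ∀ v, E v = v₂ ↔ v = v₁ := fun v => hE₁ ▸ E.injective.eq_iff
  refine ⟨E, fun a b => by simp only [hadj₂, hadj₁, ne_eq, hE], fun v => by rw [hg₁, hg₂],
    fun v => ?_⟩
  rw [hm₁, hm₂, ← hE₁, ← Multiset.map_replicate,
    Multiset.count_map_eq_count' _ _ E.injective]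

end DualGraph

theorem good_tree_connected_to_star_by_conic_deformations_general
    (e k : ℕ) (G₀ : DualGraph) (h₀ : G₀.IsStarGoodTree e k)
    (G : DualGraph) (hg : G.IsGoodTree) (hd : G.totalDeg = e)
    (hk : Multiset.card G.marks = k) :
    ∃ (m : ℕ) (c : Fin (m + 1) → DualGraph),
      DualGraph.Iso (c 0) G ∧ DualGraph.Iso (c (Fin.last m)) G₀ ∧
      (∀ i, (c i).IsGoodTree) ∧
      (∀ i : Fin m,
        DualGraph.ConnectedByConicDeformation (c i.castSucc) (c i.succ)) := by
  obtain ⟨r⟩ := G.isTree.connected.nonempty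
  obtain ⟨S, hS, hcard, hTS⟩ :=
    (ParentTree.ofConnected G.isTree.connected r G.marks).exists_isStar_reflTransGen
  obtain ⟨m, c, hc0, hcm, hc⟩ := hTS.exists_fin_chain
  refine ⟨m, fun i => (c i).toDualGraph 1, ?_, ?_, fun _ _ => rfl, hc⟩
  · change ((c 0).toDualGraph 1).Iso G
    exact hc0 ▸ hg.ofConnected_iso r
  · change ((c (Fin.last m)).toDualGraph 1).Iso G₀
    refine hcm ▸ DualGraph.IsStarGoodTree.iso ?_ h₀
    rw [← hd, hg.totalDeg_eq_card, ← hk]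
    exact hcard ▸ hS.isStarGoodTree

/-- **Key claim in Lemma 5.4.** Every good tree of total degree `e ≥ 1` with
`k` marked points can be joined to the star good tree `G₀` by a finite chain of
good trees in which each pair of consecutive good trees is connected by a conic
deformation. -/
theorem good_tree_connected_to_star_by_conic_deformations
    (e k : ℕ) (he : 1 ≤ e) (G₀ : DualGraph) (h₀ : G₀.IsStarGoodTree e k)
    (G : DualGraph) (hg : G.IsGoodTree) (hd : G.totalDeg = e)
    (hk : Multiset.card G.marks = k) :
    ∃ (m : ℕ) (c : Fin (m + 1) → DualGraph),
      DualGraph.Iso (c 0) G ∧ DualGraph.Iso (c (Fin.last m)) G₀ ∧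
      (∀ i, (c i).IsGoodTree) ∧
      (∀ i : Fin m,
        DualGraph.ConnectedByConicDeformation (c i.castSucc) (c i.succ)) :=
  good_tree_connected_to_star_by_conic_deformations_general e k G₀ h₀ G hg hd hk
end

section
/- Let G be a dual graph (a finite tree with degrees and marked points) such that d_v ∈ {0,1} for every vertex v and deg(G) ≥ 1. Then there exists a good tree G′ obtained from G by a finite sequence of contractions (each along a two-vertex subgraph consisting of a vertex of degree 0 and an adjacent vertex); in particular G is a specialization of the good tree G′ and deg(G′) = Σ_{v∈G} d_v = deg(G). -/
/-!
Contracting an edge `vw` of a tree gives a tree: the result is connected, has one vertex fewer,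
and at least one edge fewer since `vw` collapses. If `d_v = 0`, the contraction keeps every degree
in `{0, 1}`, preserves the total degree and lowers the number of vertices. While the tree is not
good it has a vertex of degree `0`, and since `deg(G) ≥ 1` also a vertex of degree `1`, so it
is nontrivial and the degree-`0` vertex has a neighbour to contract with.
-/

namespace SimpleGraph

section Contract

variable {V : Type*} [DecidableEq V] {G : SimpleGraph V} {H : Finset V}

variable (H) in
def contractMap (a : V) : {u // u ∉ H} ⊕ Unit :=
  if h : a ∈ H then .inr () else .inl ⟨a, h⟩

@[simp]
lemma contractMap_eq_inl_iff {a : V} {u : {u // u ∉ H}} : contractMap H a = .inl u ↔ a = u := by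
  by_cases ha : a ∈ H
  · simp only [contractMap, ha, dite_true, reduceCtorEq, false_iff]
    exact fun h => u.2 (h ▸ ha)
  · simp [contractMap, ha, Subtype.ext_iff]

@[simp]
lemma contractMap_eq_inr_iff {a : V} {t : Unit} : contractMap H a = .inr t ↔ a ∈ H := by
  by_cases ha : a ∈ H <;> simp [contractMap, ha]

lemma contractMap_surjective (hH : H.Nonempty) : Function.Surjective (contractMap H) := by
  rintro (u | ⟨⟩)
  · exact ⟨u, by simp⟩
  · exact ⟨hH.choose, by simpa using hH.choose_spec⟩

variable (G H) in
/-- `H` is collapsed to the vertex `.inr ()`. -/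
def contract : SimpleGraph ({u // u ∉ H} ⊕ Unit) :=
  fromRel fun a b => ∃ x y, G.Adj x y ∧ contractMap H x = a ∧ contractMap H y = b

@[simp]
lemma contract_adj_inl_inl {u w : {u // u ∉ H}} :
    (G.contract H).Adj (.inl u) (.inl w) ↔ G.Adj u w := by
  simp only [contract, fromRel_adj, contractMap_eq_inl_iff, exists_eq_right_right, exists_eq_right]
  exact ⟨fun h => h.2.elim id fun h => h.symm,
    fun h => ⟨by simpa [Subtype.ext_iff] using h.ne, .inl h⟩⟩

@[simp]
lemma contract_adj_inl_inr {u : {u // u ∉ H}} {t : Unit} :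
    (G.contract H).Adj (.inl u) (.inr t) ↔ ∃ h ∈ H, G.Adj u h := by
  simp only [contract, fromRel_adj, contractMap_eq_inl_iff, contractMap_eq_inr_iff]
  constructor
  · rintro ⟨-, ⟨x, y, hxy, rfl, hy⟩ | ⟨x, y, hxy, hx, rfl⟩⟩
    exacts [⟨y, hy, hxy⟩, ⟨x, hx, hxy.symm⟩]
  · rintro ⟨h, hH, hu⟩
    exact ⟨Sum.inl_ne_inr, .inl ⟨u, h, hu, rfl, hH⟩⟩

lemma Adj.reachable_contract {x y : V} (hxy : G.Adj x y) :
    (G.contract H).Reachable (contractMap H x) (contractMap H y) := by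
  by_cases h : contractMap H x = contractMap H y
  · rw [h]
  · exact Adj.reachable ((fromRel_adj _ _ _).2 ⟨h, .inl ⟨x, y, hxy, rfl, rfl⟩⟩)

lemma Connected.contract (hG : G.Connected) (hH : H.Nonempty) : (G.contract H).Connected := by
  refine .mk fun a b => ?_
  obtain ⟨x, rfl⟩ := contractMap_surjective hH a
  obtain ⟨y, rfl⟩ := contractMap_surjective hH b
  have := (reachable_iff_reflTransGen x y).1 (hG.preconnected x y)
  rw [reachable_iff_reflTransGen]
  exact Relation.ReflTransGen.lift' _
    (fun x y hxy => (reachable_iff_reflTransGen _ _).1 hxy.reachable_contract) _ _ this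

/-- Every edge of the contraction comes from an edge of `G`, while an edge inside `H` collapses
to the diagonal. -/
lemma ncard_edgeSet_contract_lt [Finite V] {v w : V} (hv : v ∈ H) (hw : w ∈ H) (hvw : G.Adj v w) :
    (G.contract H).edgeSet.ncard < G.edgeSet.ncard := by
  calc (G.contract H).edgeSet.ncard < (Sym2.map (contractMap H) '' G.edgeSet).ncard := by
        refine Set.ncard_lt_ncard (Set.ssubset_iff_of_subset ?_ |>.2 ?_)
        · intro e he
          induction e using Sym2.ind with | _ a b => ?_
          obtain ⟨-, ⟨x, y, hxy, rfl, rfl⟩ | ⟨x, y, hxy, rfl, rfl⟩⟩ :=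
            (fromRel_adj _ _ _).1 ((mem_edgeSet _).1 he)
          exacts [⟨s(x, y), hxy, rfl⟩, ⟨s(x, y), hxy, Sym2.eq_swap⟩]
        · refine ⟨s(.inr (), .inr ()), ⟨s(v, w), hvw, by simp [hv, hw]⟩, ?_⟩
          simp
    _ ≤ G.edgeSet.ncard := Set.ncard_image_le

lemma card_contract_vert [Fintype V] :
    Fintype.card ({u // u ∉ H} ⊕ Unit) + H.card = Fintype.card V + 1 := by
  have := Finset.card_le_univ H
  rw [Fintype.card_sum, Fintype.card_unit, Fintype.card_subtype_compl, Fintype.card_coe]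
  omega

lemma IsTree.contract_edge [Fintype V] (hG : G.IsTree) {v w : V} (hvw : G.Adj v w) :
    (G.contract {v, w}).IsTree := by
  have hc := hG.connected.contract (H := {v, w}) ⟨v, by simp⟩
  have h₁ := hc.card_vert_le_card_edgeSet_add_one
  have h₂ := ncard_edgeSet_contract_lt (H := {v, w}) (by simp) (by simp) hvw
  have h₃ := (isTree_iff_connected_and_card.1 hG).2
  have h₄ := card_contract_vert (H := {v, w})
  rw [Finset.card_pair hvw.ne] at h₄
  rw [isTree_iff_connected_and_card]
  simp only [Nat.card_coe_set_eq, Nat.card_eq_fintype_card] at *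
  exact ⟨hc, by omega⟩

end Contract

end SimpleGraph

theorem exists_fin_chain_of_forall_exists_step {α : Type*} {R : α → α → Prop} {P I : α → Prop}
    (μ : α → ℕ) (step : ∀ a, I a → ¬ P a → ∃ b, R a b ∧ I b ∧ μ b < μ a) (a : α) (ha : I a) :
    ∃ (m : ℕ) (c : Fin (m + 1) → α), c 0 = a ∧ P (c (Fin.last m)) ∧ I (c (Fin.last m)) ∧
      ∀ i : Fin m, R (c i.castSucc) (c i.succ) := by
  by_cases hP : P a
  · exact ⟨0, fun _ => a, rfl, hP, ha, Fin.elim0⟩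
  obtain ⟨b, hab, hb, hμ⟩ := step a ha hP
  obtain ⟨m, c, rfl, hPc, hIc, hc⟩ := exists_fin_chain_of_forall_exists_step μ step b hb
  refine ⟨m + 1, Fin.cons a c, rfl, by simpa [← Fin.succ_last] using hPc,
    by simpa [← Fin.succ_last] using hIc, Fin.cases (by simpa using hab) fun i => ?_⟩
  simpa [← Fin.succ_castSucc] using hc i
termination_by μ a
decreasing_by exact hμ

namespace DualGraph

open SimpleGraph

variable (G : DualGraph)

def IsDegreeZeroEdgeContraction (G₁ : DualGraph) : Prop :=
  ∃ v w : G.V, G.deg v = 0 ∧ G.graph.Adj v w ∧ G.IsContractionAlong G₁ {v, w}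

def contract (H : Finset G.V) (hT : (G.graph.contract H).IsTree) : DualGraph where
  V := {u // u ∉ H} ⊕ Unit
  fintypeV := inferInstance
  decEqV := inferInstance
  graph := G.graph.contract H
  isTree := hT
  deg a := ∑ x with contractMap H x = a, G.deg x
  marks := G.marks.map (contractMap H)

variable {G} {H : Finset G.V} {hT : (G.graph.contract H).IsTree}

@[simp]
lemma contract_deg_inl (u : {u // u ∉ H}) : (G.contract H hT).deg (.inl u) = G.deg u := by
  simp [contract, Finset.filter_eq']

@[simp]
lemma contract_deg_inr (t : Unit) : (G.contract H hT).deg (.inr t) = ∑ x ∈ H, G.deg x := by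
  simp [contract]

lemma totalDeg_contract : (G.contract H hT).totalDeg = G.totalDeg :=
  Finset.sum_fiberwise _ _ _

lemma isContractionAlong_contract (hH : H.Nonempty)
    (hconn : (G.graph.induce (H : Set G.V)).Connected) :
    G.IsContractionAlong (G.contract H hT) H := by
  refine ⟨hH, hconn, Equiv.refl _, fun _ _ => contract_adj_inl_inl,
    fun _ => contract_adj_inl_inr, contract_deg_inl, contract_deg_inr (), fun u => ?_, ?_⟩
  · change (G.marks.map (contractMap H)).count (.inl u) = _
    simp_rw [Multiset.count_map, Multiset.count_eq_card_filter_eq, eq_comm (a := Sum.inl u),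
      contractMap_eq_inl_iff, eq_comm (b := (u : G.V))]
  · change (G.marks.map (contractMap H)).count (.inr ()) = _
    simp_rw [Multiset.count_map, eq_comm (a := Sum.inr ()), contractMap_eq_inr_iff]

theorem exists_isDegreeZeroEdgeContraction (hG : ∀ v, G.deg v ≤ 1) (hd : 1 ≤ G.totalDeg)
    (hgood : ¬ G.IsGoodTree) :
    ∃ G₁ : DualGraph, G.IsDegreeZeroEdgeContraction G₁ ∧ (∀ v, G₁.deg v ≤ 1) ∧
      G₁.totalDeg = G.totalDeg ∧ Fintype.card G₁.V < Fintype.card G.V := by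
  obtain ⟨v, hv⟩ : ∃ v, G.deg v = 0 := by
    simp only [IsGoodTree, not_forall] at hgood
    obtain ⟨v, hv⟩ := hgood
    exact ⟨v, by have := hG v; omega⟩
  obtain ⟨u, -, hu⟩ := Finset.exists_ne_zero_of_sum_ne_zero (s := .univ) (f := G.deg)
    (by unfold totalDeg at hd; omega)
  have : Nontrivial G.V := ⟨v, u, fun h => hu (h ▸ hv)⟩
  obtain ⟨w, hvw⟩ := G.isTree.connected.preconnected.exists_adj_of_nontrivial v
  refine ⟨G.contract {v, w} (G.isTree.contract_edge hvw),
    ⟨v, w, hv, hvw, isContractionAlong_contract ⟨v, by simp⟩ ?_⟩, ?_, totalDeg_contract, ?_⟩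
  · rw [Finset.coe_pair]
    exact G.graph.induce_pair_connected_of_adj hvw
  · rintro (u | ⟨⟩)
    · simpa using hG u
    · simpa [Finset.sum_pair hvw.ne, hv] using hG w
  · have := card_contract_vert (H := {v, w})
    rw [Finset.card_pair hvw.ne] at this
    change Fintype.card ({u // u ∉ ({v, w} : Finset G.V)} ⊕ Unit) < _
    omega

end DualGraph

/-- **Lemma 5.5.** Let `G` be a dual graph all of whose vertex degrees are `0`
or `1`, with `deg(G) ≥ 1`. Then a good tree `G′` can be obtained from `G` by a
finite sequence of contractions, each along a two-vertex subgraph consisting of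
a vertex of degree `0` and an adjacent vertex; in particular `G` is a
specialization of the good tree `G′` and `deg(G′) = deg(G)`. -/
theorem dual_graph_specializes_good_tree
    (G : DualGraph) (h01 : ∀ v : G.V, G.deg v = 0 ∨ G.deg v = 1)
    (hd : 1 ≤ G.totalDeg) :
    ∃ (m : ℕ) (c : Fin (m + 1) → DualGraph),
      c 0 = G ∧
      (c (Fin.last m)).IsGoodTree ∧
      (c (Fin.last m)).totalDeg = G.totalDeg ∧
      ∀ i : Fin m, ∃ v w : (c i.castSucc).V,
        (c i.castSucc).deg v = 0 ∧ (c i.castSucc).graph.Adj v w ∧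
        (c i.castSucc).IsContractionAlong (c i.succ) {v, w} := by
  obtain ⟨m, c, hc₀, hgood, ⟨-, hdeg⟩, hsteps⟩ :=
    exists_fin_chain_of_forall_exists_step (R := DualGraph.IsDegreeZeroEdgeContraction)
      (I := fun K => (∀ v, K.deg v ≤ 1) ∧ K.totalDeg = G.totalDeg) (fun K => Fintype.card K.V)
      (fun K ⟨hK, hKd⟩ hgood => by
        obtain ⟨K₁, hstep, hK₁, hK₁d, hcard⟩ :=
          K.exists_isDegreeZeroEdgeContraction hK (hKd ▸ hd) hgood
        exact ⟨K₁, hstep, ⟨hK₁, hK₁d.trans hKd⟩, hcard⟩)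
      G ⟨fun v => by have := h01 v; omega, rfl⟩
  exact ⟨m, c, hc₀, hgood, hdeg, hsteps⟩
end

section
/- Let S, Z, Y be topological spaces, let f : Z → S be a continuous map, and let g : Y → S be a proper continuous map (closed with compact fibers, i.e., universally closed) all of whose fibers g⁻¹(s), s ∈ S, are nonempty and connected. If Z is connected, then the fiber product Z ×_S Y = {(z,y) ∈ Z × Y : f(z) = g(y)}, with the subspace topology of the product, is connected. -/
/-!
The projection `π : Z ×_S Y → Z` is the base change of the proper map `g` along `f`, hence
proper, and its fiber over `z` is a copy of the connected fiber `g⁻¹(f z)`. A proper map with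
nonempty fibers is a closed surjection, hence a quotient map, and a quotient map with connected
fibers onto a connected space has connected domain.
-/

open Filter Set Topology

theorem connectedSpace_of_isCoinducing_of_isConnected_fibers {X B : Type*} [TopologicalSpace X]
    [TopologicalSpace B] [ConnectedSpace B] {π : X → B} (hπ : IsCoinducing π)
    (hfib : ∀ b, IsConnected (π ⁻¹' {b})) : ConnectedSpace X := by
  rw [connectedSpace_iff_univ, ← preimage_univ (f := π)]
  exact hπ.isConnected_preimage_of_isClosed hfib isClosed_univ isConnected_univ

section FiberProduct

variable {S Z Y : Type*} [TopologicalSpace Z] [TopologicalSpace Y]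
  {f : Z → S} {g : Y → S}

theorem isConnected_fiberProduct_fst_fiber {z : Z} (hz : IsConnected (g ⁻¹' {f z})) :
    IsConnected ((fun p : {p : Z × Y | f p.1 = g p.2} ↦ p.1.1) ⁻¹' {z}) := by
  have : ConnectedSpace (g ⁻¹' {f z}) := Subtype.connectedSpace hz
  let ι : g ⁻¹' {f z} → {p : Z × Y | f p.1 = g p.2} := fun y ↦ ⟨(z, y.1), y.2.symm⟩
  have hι : Continuous ι := (continuous_const.prodMk continuous_subtype_val).subtype_mk _
  convert isConnected_range hι
  ext ⟨⟨z', y⟩, hzy⟩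
  constructor
  · rintro rfl
    exact ⟨⟨y, hzy.symm⟩, rfl⟩
  · rintro ⟨y', hy'⟩
    exact congr_arg (·.1.1) hy'.symm

variable [TopologicalSpace S]

theorem isProperMap_fiberProduct_fst (hf : Continuous f) (hg : IsProperMap g) :
    IsProperMap (fun p : {p : Z × Y | f p.1 = g p.2} ↦ p.1.1) := by
  rw [isProperMap_iff_ultrafilter]
  refine ⟨continuous_fst.comp continuous_subtype_val, fun 𝒰 z hz ↦ ?_⟩
  have hg𝒰 : Tendsto g (map (fun p : {p : Z × Y | f p.1 = g p.2} ↦ p.1.2) 𝒰) (𝓝 (f z)) := by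
    rw [tendsto_map'_iff]
    exact ((hf.tendsto z).comp hz).congr fun p ↦ p.2
  obtain ⟨y, hy, hle⟩ := hg.ultrafilter_le_nhds_of_tendsto (𝒰 := 𝒰.map _) hg𝒰
  refine ⟨⟨(z, y), hy.symm⟩, rfl, ?_⟩
  rw [nhds_induced, ← map_le_iff_le_comap, nhds_prod_eq, le_prod]
  exact ⟨hz, hle⟩

end FiberProduct

/-- **Topological content of Lemma 5.6.** Let `f : Z → S` be continuous and
`g : Y → S` a proper continuous map all of whose fibers are nonempty and
connected. If `Z` is connected, then the fiber product
`Z ×_S Y = {(z, y) | f z = g y}` (with the subspace topology of the product)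
is connected. -/
theorem fiber_product_connected
    {S Z Y : Type*} [TopologicalSpace S] [TopologicalSpace Z] [TopologicalSpace Y]
    (f : Z → S) (hf : Continuous f) (g : Y → S) (hg : IsProperMap g)
    (hfib : ∀ s : S, (g ⁻¹' {s}).Nonempty ∧ IsConnected (g ⁻¹' {s}))
    (hZ : ConnectedSpace Z) :
    IsConnected {p : Z × Y | f p.1 = g p.2} := by
  have hπ := isProperMap_fiberProduct_fst hf hg
  have hπfib (z : Z) := isConnected_fiberProduct_fst_fiber (hfib (f z)).2
  have hπsurj : Function.Surjective (fun p : {p : Z × Y | f p.1 = g p.2} ↦ p.1.1) :=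
    fun z ↦ (hπfib z).nonempty
  rw [isConnected_iff_connectedSpace]
  exact connectedSpace_of_isCoinducing_of_isConnected_fibers
    (hπ.isClosedMap.isQuotientMap hπ.continuous hπsurj).isCoinducing hπfib
end
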